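/- arXiv:1207.6512 — 4 statements merged into one kernel-verified Lean document; each statement's English description precedes it below -/
import Mathlib

section
/- Suppose q = r^2 is odd, C_1 and C_2 are F_r-linear codes in F_q^n, and α ∈ F_q \ {0} satisfies α^r = -α. If C_1^{⊥_{TrE}} ⊆ C_2, then α^{-1} · conj(C_1^{⊥_{TrE}}) ⊆ (C_2^{⊥_{TrE}})^{⊥_{TrH}}, where conj applies x ↦ x^r coordinatewise. -/
/-- The trace Euclidean dual of a code `C ⊆ F_q^n`. -/
def traceDual (Fr : Type*) {Fq : Type*} [Field Fr] [Field Fq] [Algebra Fr Fq]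
    {n : ℕ} (C : Set (Fin n → Fq)) : Set (Fin n → Fq) :=
  {u | ∀ v ∈ C, Algebra.trace Fr Fq (∑ i, u i * v i) = 0}

/-- The trace Hermitian dual (odd `q = r²` case, with `ᾱ = -α`):
`{u | Tr(α ∑ u_i v̄_i) = 0 for all v ∈ C}` where `x̄ = x^r`. -/
def traceHermDualOdd (Fr : Type*) {Fq : Type*} [Field Fr] [Field Fq]
    [Fintype Fr] [Algebra Fr Fq] {n : ℕ} (α : Fq) (C : Set (Fin n → Fq)) :
    Set (Fin n → Fq) :=
  {u | ∀ v ∈ C,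
    Algebra.trace Fr Fq (α * ∑ i, u i * (v i) ^ Fintype.card Fr) = 0}

/-!
Conjugation `x ↦ x^r` is the Frobenius automorphism of `F_q` over `F_r`, so it preserves the
trace and is multiplicative and additive. Hence for `w = α⁻¹ · conj u` the factor `α` cancels and
`Tr(α ∑ wᵢ v̄ᵢ) = Tr((∑ uᵢ vᵢ)^r) = Tr(∑ uᵢ vᵢ)`, which vanishes when `u ∈ C₁^{⊥TrE} ⊆ C₂` and
`v ∈ C₂^{⊥TrE}`.
-/

section Frobenius

variable {K L : Type*} [Field K] [Fintype K] [Field L] [Algebra K L]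

theorem Algebra.trace_pow_card [Algebra.IsAlgebraic K L] (x : L) :
    Algebra.trace K L (x ^ Fintype.card K) = Algebra.trace K L x :=
  Algebra.trace_eq_of_algEquiv (FiniteField.frobeniusAlgEquivOfAlgebraic K L) x

theorem Algebra.trace_sum_pow_card_mul_pow_card [Algebra.IsAlgebraic K L] {ι : Type*}
    [Fintype ι] (u v : ι → L) :
    Algebra.trace K L (∑ i, u i ^ Fintype.card K * v i ^ Fintype.card K) =
      Algebra.trace K L (∑ i, u i * v i) := by
  have hfrob : ∑ i, u i ^ Fintype.card K * v i ^ Fintype.card K =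
      FiniteField.frobeniusAlgHom K L (∑ i, u i * v i) := by
    simp only [map_sum, map_mul, FiniteField.coe_frobeniusAlgHom]
  rw [hfrob, FiniteField.coe_frobeniusAlgHom, Algebra.trace_pow_card]

end Frobenius

theorem traceDual_nested_herm_odd_general {Fr Fq : Type*} [Field Fr] [Field Fq]
    [Fintype Fr] [Fintype Fq] [Algebra Fr Fq]
    {n : ℕ} (C₁ C₂ : Submodule Fr (Fin n → Fq)) (α : Fq) (hα : α ≠ 0)
    (h : traceDual Fr (C₁ : Set (Fin n → Fq)) ⊆ (C₂ : Set (Fin n → Fq))) :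
    (fun u : Fin n → Fq => fun i => α⁻¹ * (u i) ^ Fintype.card Fr) ''
        traceDual Fr (C₁ : Set (Fin n → Fq))
      ⊆ traceHermDualOdd Fr α (traceDual Fr (C₂ : Set (Fin n → Fq))) := by
  rintro _ ⟨u, hu, rfl⟩ v hv
  have hcancel : α * ∑ i, α⁻¹ * u i ^ Fintype.card Fr * v i ^ Fintype.card Fr =
      ∑ i, u i ^ Fintype.card Fr * v i ^ Fintype.card Fr := by
    simp only [Finset.mul_sum, mul_assoc, mul_inv_cancel_left₀ hα]
  rw [hcancel, Algebra.trace_sum_pow_card_mul_pow_card]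
  simpa only [mul_comm] using hv u (h hu)

/-- If `q = r²` is odd and `C₁^{⊥TrE} ⊆ C₂`, then
`α⁻¹ · conj(C₁^{⊥TrE}) ⊆ (C₂^{⊥TrE})^{⊥TrH}`. -/
theorem traceDual_nested_herm_odd {Fr Fq : Type*} [Field Fr] [Field Fq]
    [Fintype Fr] [Fintype Fq] [Algebra Fr Fq]
    (hq : Fintype.card Fq = Fintype.card Fr ^ 2) (hodd : Odd (Fintype.card Fq))
    {n : ℕ} (C₁ C₂ : Submodule Fr (Fin n → Fq)) (α : Fq) (hα : α ≠ 0)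
    (hαconj : α ^ Fintype.card Fr = -α)
    (h : traceDual Fr (C₁ : Set (Fin n → Fq)) ⊆ (C₂ : Set (Fin n → Fq))) :
    (fun u : Fin n → Fq => fun i => α⁻¹ * (u i) ^ Fintype.card Fr) ''
        traceDual Fr (C₁ : Set (Fin n → Fq))
      ⊆ traceHermDualOdd Fr α (traceDual Fr (C₂ : Set (Fin n → Fq))) :=
  traceDual_nested_herm_odd_general C₁ C₂ α hα h
end

section
/- There is no pure [[5,1,3/2]]_2 CSS code; in particular, there does not exist a [5,2,3]_2 binary linear code containing a codeword of weight 5. -/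
/-!
A weight-5 word in `F₂⁵` is the all-ones word `1`. In a 2-dimensional code containing `1` there
is a codeword `w ∉ span {1}`, so both `w` and `1 + w` are nonzero; their supports are complementary,
so their weights add up to `5` and cannot both be at least `3`.
-/

section Hamming

variable {ι : Type*} [Fintype ι]

theorem hammingNorm_eq_card_iff {β : ι → Type*} [∀ i, DecidableEq (β i)] [∀ i, Zero (β i)]
    {x : ∀ i, β i} : hammingNorm x = Fintype.card ι ↔ ∀ i, x i ≠ 0 := by
  simp [hammingNorm, ← Finset.card_univ, Finset.card_filter_eq_iff]

theorem ZMod.eq_one_of_hammingNorm_eq_card {x : ι → ZMod 2}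
    (hx : hammingNorm x = Fintype.card ι) : x = 1 := by
  have hne_zero_iff : ∀ a : ZMod 2, a ≠ 0 → a = 1 := by decide
  funext i
  exact hne_zero_iff _ (hammingNorm_eq_card_iff.mp hx i)

theorem ZMod.hammingNorm_add_hammingNorm_one_add (x : ι → ZMod 2) :
    hammingNorm x + hammingNorm (1 + x) = Fintype.card ι := by
  have hsupport : ∀ a : ZMod 2, 1 + a ≠ 0 ↔ ¬a ≠ 0 := by decide
  simp only [hammingNorm, Pi.add_apply, Pi.one_apply, hsupport]
  exact Finset.card_filter_add_card_filter_not _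

end Hamming

theorem Submodule.exists_mem_notMem_span_singleton {K V : Type*} [DivisionRing K]
    [AddCommGroup V] [Module K V] {C : Submodule K V} (hC : 1 < Module.finrank K C) (v : V) :
    ∃ w ∈ C, w ∉ K ∙ v := by
  refine SetLike.not_le_iff_exists.mp fun hle => ?_
  have hspan : Module.finrank K (K ∙ v) ≤ 1 := by
    simpa using finrank_span_le_card (R := K) ({v} : Set V)
  have hCle := Submodule.finrank_mono hle
  omega

/-- No `[5,2,3]₂` binary linear code contains a codeword of weight `5`;
in particular there is no pure `[[5,1,3/2]]₂` CSS code of this shape. -/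
theorem no_weight_five_in_5_2_3_code (C : Submodule (ZMod 2) (Fin 5 → ZMod 2))
    (hdim : Module.finrank (ZMod 2) C = 2)
    (hd : ∀ c ∈ C, c ≠ 0 → 3 ≤ hammingNorm c) :
    ¬ ∃ v ∈ C, hammingNorm v = 5 := by
  rintro ⟨v, hvC, hv5⟩
  obtain rfl : v = 1 := ZMod.eq_one_of_hammingNorm_eq_card hv5
  obtain ⟨w, hwC, hw⟩ := Submodule.exists_mem_notMem_span_singleton (C := C) (by omega) 1
  have hw0 : w ≠ 0 := fun h => hw (h ▸ zero_mem _)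
  have hw1 : 1 + w ≠ 0 := fun h => hw <| by
    rw [eq_neg_of_add_eq_zero_right h]
    exact neg_mem (Submodule.mem_span_singleton_self _)
  have hwt := hd w hwC hw0
  have hwt' := hd (1 + w) (add_mem hvC hwC) hw1
  have hsum := ZMod.hammingNorm_add_hammingNorm_one_add w
  simp only [Fintype.card_fin] at hsum
  omega
end

section
/- Structure of F_r-linear cyclic codes over a quadratic extension: any cyclic F_r-linear code C of length n over F_q = F_r(ω) (q = r^2) can be written as an F_r[x]-module C = ⟨a(x) + ω b(x), c(x)⟩ where a, b, c ∈ F_r[x], b and c are monic divisors of x^n - 1 in F_r[x], c divides a·(x^n-1)/b in F_r[x], and dim_{F_r} C = 2n - deg b - deg c. -/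
/-- Generating set `{x^k·(a + ωb), x^k·c : k ∈ ℕ}` inside
`F_q[x]/(x^n - 1)`, for `a, b, c ∈ F_r[x]`. Spanning over `F_r` gives the
`F_r[x]`-submodule generated by `a + ωb` and `c`. -/
def cyclicGenSet (Fr : Type*) {Fq : Type*} [Field Fr] [Field Fq] [Algebra Fr Fq]
    (ω : Fq) (n : ℕ) (a b c : Polynomial Fr) :
    Set (Polynomial Fq ⧸ Ideal.span {(Polynomial.X : Polynomial Fq) ^ n - 1}) :=
  {m | ∃ k : ℕ,
    m = (Ideal.Quotient.mk (Ideal.span {(Polynomial.X : Polynomial Fq) ^ n - 1})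
          Polynomial.X) ^ k *
        Ideal.Quotient.mk _ (a.map (algebraMap Fr Fq) +
          Polynomial.C ω * b.map (algebraMap Fr Fq)) ∨
    m = (Ideal.Quotient.mk (Ideal.span {(Polynomial.X : Polynomial Fq) ^ n - 1})
          Polynomial.X) ^ k *
        Ideal.Quotient.mk _ (c.map (algebraMap Fr Fq))}


/-! Writing polynomials over `F_q` as `f + ω g` identifies `F_q[x]/(xⁿ - 1)` with `R × R`,
`R = F_r[x]/(xⁿ - 1)`, compatibly with multiplication by `x`, so a cyclic `F_r`-linear code
becomes an `R`-submodule `D` of `R × R`. Ideals of `R` are principal, generated by monic divisors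
of `xⁿ - 1`: the second projection of `D` is `(b)` and its intersection with `R × 0` is `(c)`.
If `(a, b) ∈ D`, then `D` is generated by `(a, b)` and `(c, 0)`, multiplying `(a, b)` by
`(xⁿ - 1)/b` shows `c ∣ a (xⁿ - 1)/b`, and rank-nullity for the second projection gives
`dim D = (n - deg b) + (n - deg c)`. -/

open Polynomial Module

theorem Module.Basis.span_pair_eq_top {K V : Type*} [Semiring K] [AddCommMonoid V] [Module K V]
    (B : Basis (Fin 2) K V) : Submodule.span K {B 0, B 1} = ⊤ := by
  rw [← B.span_eq]
  congr 1
  ext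
  simp [Fin.exists_fin_two, eq_comm]

namespace Submodule

theorem eq_span_pair_of_map_snd_of_comap_inl {A : Type*} [CommRing A]
    (D : Submodule A (A × A)) {α β γ : A} (hαβ : (α, β) ∈ D)
    (hsnd : D.map (LinearMap.snd A A A) = Ideal.span {β})
    (hinl : D.comap (LinearMap.inl A A A) = Ideal.span {γ}) :
    D = span A {(α, β), (γ, 0)} := by
  refine le_antisymm (fun p hp => ?_) (span_le.2 ?_)
  · obtain ⟨s, hs⟩ := Ideal.mem_span_singleton'.1 (hsnd ▸ mem_map_of_mem hp)
    have hrest : p.1 - s * α ∈ D.comap (LinearMap.inl A A A) := by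
      have h := D.sub_mem hp (D.smul_mem s hαβ)
      rwa [show p - s • (α, β) = (p.1 - s * α, 0) by ext <;> simp [hs]] at h
    obtain ⟨t, ht⟩ := Ideal.mem_span_singleton'.1 (hinl ▸ hrest)
    rw [show p = s • (α, β) + t • (γ, 0) by ext <;> simp [ht, hs]]
    exact add_mem (smul_mem _ _ (subset_span (by simp))) (smul_mem _ _ (subset_span (by simp)))
  · rintro _ (rfl | rfl)
    · exact hαβ
    · exact (hinl ▸ Ideal.mem_span_singleton_self γ : γ ∈ D.comap (LinearMap.inl A A A))

theorem finrank_eq_finrank_map_snd_add_finrank_comap_inl {K M N : Type*} [Field K]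
    [AddCommGroup M] [Module K M] [AddCommGroup N] [Module K N]
    [FiniteDimensional K M] [FiniteDimensional K N] (D : Submodule K (M × N)) :
    finrank K D = finrank K (D.map (LinearMap.snd K M N)) +
      finrank K (D.comap (LinearMap.inl K M N)) := by
  let f : D →ₗ[K] N := LinearMap.snd K M N ∘ₗ D.subtype
  let g : LinearMap.ker f →ₗ[K] M :=
    LinearMap.fst K M N ∘ₗ D.subtype ∘ₗ (LinearMap.ker f).subtype
  have hg : Function.Injective g := by
    rintro ⟨⟨x, hx⟩, hfx⟩ ⟨⟨y, hy⟩, hfy⟩ h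
    simp only [LinearMap.mem_ker, f, g] at hfx hfy h
    ext
    · exact h
    · simp_all
  have hrange_f : LinearMap.range f = D.map (LinearMap.snd K M N) := by
    ext; simp [f]
  have hrange_g : LinearMap.range g = D.comap (LinearMap.inl K M N) := by
    ext x
    simp only [LinearMap.mem_range, mem_comap, LinearMap.inl_apply]
    constructor
    · rintro ⟨⟨⟨y, hy⟩, hfy⟩, rfl⟩
      simp only [LinearMap.mem_ker, f] at hfy
      have hy' : y = (y.1, 0) := Prod.ext rfl hfy
      simpa [g, ← hy'] using hy
    · intro hx
      exact ⟨⟨⟨(x, 0), hx⟩, by simp [f]⟩, rfl⟩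
  rw [← f.finrank_range_add_finrank_ker, ← LinearMap.finrank_range_of_inj hg, hrange_f,
    hrange_g]

end Submodule

namespace Polynomial

theorem natDegree_X_pow_sub_one {R : Type*} [Ring R] [Nontrivial R] (n : ℕ) :
    ((X : R[X]) ^ n - 1).natDegree = n := by
  rw [← C_1, natDegree_X_pow_sub_C]

theorem X_pow_sub_one_ne_zero {R : Type*} [Ring R] [Nontrivial R] {n : ℕ} (hn : n ≠ 0) :
    (X : R[X]) ^ n - 1 ≠ 0 := by
  simpa using X_pow_sub_C_ne_zero (Nat.pos_of_ne_zero hn) (1 : R)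

theorem exists_eq_map_add_C_mul_map {K L : Type*} [CommSemiring K] [Semiring L] [Algebra K L]
    {ω : L} (hω : Submodule.span K {1, ω} = ⊤) (p : L[X]) :
    ∃ f g : K[X], p = f.map (algebraMap K L) + C ω * g.map (algebraMap K L) := by
  induction p using Polynomial.induction_on' with
  | add p q hp hq =>
    obtain ⟨f₁, g₁, rfl⟩ := hp
    obtain ⟨f₂, g₂, rfl⟩ := hq
    exact ⟨f₁ + f₂, g₁ + g₂, by simp only [Polynomial.map_add, mul_add]; abel⟩
  | monomial k a =>
    obtain ⟨x, y, hxy⟩ := Submodule.mem_span_pair.1 (hω ▸ Submodule.mem_top : a ∈ _)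
    refine ⟨monomial k x, monomial k y, ?_⟩
    rw [← hxy]
    simp [C_mul_monomial, Algebra.smul_def, Algebra.commutes]

variable {K : Type*} [Field K] {f g : K[X]}

theorem finiteDimensional_quotient_span (hf : f ≠ 0) :
    FiniteDimensional K (K[X] ⧸ Ideal.span {f}) :=
  (AdjoinRoot.powerBasis hf).finite

theorem span_range_pow_mk_X_eq_top (hf : f ≠ 0) :
    Submodule.span K (Set.range fun k : ℕ => Ideal.Quotient.mk (Ideal.span {f}) X ^ k) = ⊤ := by
  refine eq_top_iff.2 ((AdjoinRoot.powerBasis hf).basis.span_eq.ge.trans (Submodule.span_mono ?_))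
  rintro _ ⟨i, rfl⟩
  exact ⟨i, by rw [PowerBasis.basis_eq_pow]; rfl⟩

theorem exists_monic_dvd_eq_span_mk (hf : f ≠ 0) (I : Ideal (K[X] ⧸ Ideal.span {f})) :
    ∃ g : K[X], g.Monic ∧ g ∣ f ∧ I = Ideal.span {Ideal.Quotient.mk _ g} := by
  classical
  set J := I.comap (Ideal.Quotient.mk (Ideal.span {f}))
  obtain ⟨g₀, hJ⟩ := (IsPrincipalIdealRing.principal J).principal
  have hJ' : J = Ideal.span {normalize g₀} := by
    rw [Ideal.span_singleton_eq_span_singleton.2 (normalize_associated g₀)]; exact hJ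
  have hfJ : f ∈ J := by
    simp [J, Ideal.Quotient.eq_zero_iff_mem.2 (Ideal.mem_span_singleton_self f)]
  have hg₀ : g₀ ≠ 0 := by
    rintro rfl
    simp [hJ', hf] at hfJ
  refine ⟨normalize g₀, monic_normalize hg₀, Ideal.mem_span_singleton.1 (hJ' ▸ hfJ), ?_⟩
  rw [← Ideal.map_comap_of_surjective _ Ideal.Quotient.mk_surjective I, ← Set.image_singleton,
    ← Ideal.map_span, ← hJ']

theorem dvd_of_mk_mem_span_mk {p : K[X]} (hgf : g ∣ f)
    (h : Ideal.Quotient.mk (Ideal.span {f}) p ∈ Ideal.span {Ideal.Quotient.mk _ g}) :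
    g ∣ p := by
  obtain ⟨t, ht⟩ := Ideal.mem_span_singleton'.1 h
  obtain ⟨t, rfl⟩ := Ideal.Quotient.mk_surjective t
  rw [← map_mul, Ideal.Quotient.eq, Ideal.mem_span_singleton] at ht
  simpa using dvd_sub (dvd_mul_left g t) (hgf.trans ht)

theorem finrank_span_mk_of_dvd (hf : f ≠ 0) (hgf : g ∣ f) :
    finrank K ((Ideal.span {Ideal.Quotient.mk (Ideal.span {f}) g}).restrictScalars K) =
      f.natDegree - g.natDegree := by
  have := finiteDimensional_quotient_span hf
  set I := Ideal.span {Ideal.Quotient.mk (Ideal.span {f}) g}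
  have hle : Ideal.span {f} ≤ Ideal.span {g} := Ideal.span_singleton_le_span_singleton.2 hgf
  have hquot : finrank K ((K[X] ⧸ Ideal.span {f}) ⧸ I.restrictScalars K) = g.natDegree := by
    have hI : (Ideal.span {g}).map (Ideal.Quotient.mkₐ K (Ideal.span {f})) = I := by
      rw [Ideal.map_span, Set.image_singleton]; rfl
    rw [(Submodule.Quotient.restrictScalarsEquiv K I).finrank_eq, ← hI,
      (DoubleQuot.quotQuotEquivQuotOfLEₐ K hle).toLinearEquiv.finrank_eq,
      finrank_quotient_span_eq_natDegree]
  have := Submodule.finrank_quotient_add_finrank (I.restrictScalars K)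
  rw [hquot, finrank_quotient_span_eq_natDegree] at this
  omega

variable
  {D : Submodule (K[X] ⧸ Ideal.span {f}) ((K[X] ⧸ Ideal.span {f}) × (K[X] ⧸ Ideal.span {f}))}
  {a b c : K[X]}

theorem dvd_mul_divByMonic_of_mk_mem (hb : b.Monic) (hbf : b ∣ f) (hcf : c ∣ f)
    (hab : (Ideal.Quotient.mk _ a, Ideal.Quotient.mk _ b) ∈ D)
    (hinl : D.comap (LinearMap.inl _ _ _) = Ideal.span {Ideal.Quotient.mk _ c}) :
    c ∣ a * (f /ₘ b) := by
  have hbd : b * (f /ₘ b) = f := by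
    rw [divByMonic_eq_div _ hb, EuclideanDomain.mul_div_cancel' hb.ne_zero hbf]
  have hd := D.smul_mem (Ideal.Quotient.mk _ (f /ₘ b)) hab
  rw [Prod.smul_mk, smul_eq_mul, smul_eq_mul, ← map_mul, ← map_mul, mul_comm _ a, mul_comm _ b,
    hbd, Ideal.Quotient.mk_singleton_self] at hd
  exact dvd_of_mk_mem_span_mk hcf (hinl ▸ hd)

theorem finrank_restrictScalars_of_map_snd_of_comap_inl (hf : f ≠ 0) (hbf : b ∣ f) (hcf : c ∣ f)
    (hsnd : D.map (LinearMap.snd _ _ _) = Ideal.span {Ideal.Quotient.mk _ b})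
    (hinl : D.comap (LinearMap.inl _ _ _) = Ideal.span {Ideal.Quotient.mk _ c}) :
    finrank K (D.restrictScalars K) = 2 * f.natDegree - b.natDegree - c.natDegree := by
  have := finiteDimensional_quotient_span hf
  have hsnd' : (D.restrictScalars K).map (LinearMap.snd K _ _) =
      (Ideal.span {Ideal.Quotient.mk _ b}).restrictScalars K := by rw [← hsnd]; rfl
  have hinl' : (D.restrictScalars K).comap (LinearMap.inl K _ _) =
      (Ideal.span {Ideal.Quotient.mk _ c}).restrictScalars K := by rw [← hinl]; rfl
  rw [Submodule.finrank_eq_finrank_map_snd_add_finrank_comap_inl, hsnd', hinl',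
    finrank_span_mk_of_dvd hf hbf, finrank_span_mk_of_dvd hf hcf]
  have := natDegree_le_of_dvd hbf hf
  have := natDegree_le_of_dvd hcf hf
  omega

end Polynomial

abbrev CyclicQuotient (K : Type*) [CommRing K] (n : ℕ) : Type _ :=
  K[X] ⧸ Ideal.span {(X : K[X]) ^ n - 1}

namespace CyclicQuotient

variable {Fr Fq : Type*} [Field Fr] [Field Fq] [Algebra Fr Fq] {n : ℕ}

variable (Fr Fq n) in
noncomputable def map : CyclicQuotient Fr n →ₐ[Fr] CyclicQuotient Fq n :=
  Ideal.quotientMapₐ _ (mapAlg Fr Fq) <| (Ideal.span_singleton_le_iff_mem _).2 <| by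
    simp [Ideal.mem_comap, mapAlg_eq_map]

theorem map_mk (p : Fr[X]) :
    map Fr Fq n (Ideal.Quotient.mk _ p) = Ideal.Quotient.mk _ (p.map (algebraMap Fr Fq)) := rfl

theorem map_mul_mem {C : Submodule Fr (CyclicQuotient Fq n)}
    (hC : ∀ m ∈ C, Ideal.Quotient.mk _ X * m ∈ C) (r : CyclicQuotient Fr n)
    {m : CyclicQuotient Fq n} (hm : m ∈ C) : map Fr Fq n r * m ∈ C := by
  obtain ⟨p, rfl⟩ := Ideal.Quotient.mk_surjective r
  induction p using Polynomial.induction_on with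
  | C a =>
    have hCa : (Ideal.Quotient.mk _ (Polynomial.C a) : CyclicQuotient Fr n) = algebraMap Fr _ a :=
      rfl
    rw [hCa, AlgHom.commutes, ← Algebra.smul_def]
    exact C.smul_mem a hm
  | add p q hp hq => simpa only [map_add, add_mul] using C.add_mem hp hq
  | monomial k a ih =>
    have hX : map Fr Fq n (Ideal.Quotient.mk _ X) = Ideal.Quotient.mk _ X := by
      rw [map_mk, Polynomial.map_X]
    rw [pow_succ, ← mul_assoc, map_mul, map_mul, hX, mul_right_comm, mul_comm]
    exact hC _ ih

variable (Fr n) in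
noncomputable def ofPair (ω : Fq) :
    CyclicQuotient Fr n × CyclicQuotient Fr n →ₗ[Fr] CyclicQuotient Fq n :=
  (map Fr Fq n).toLinearMap.coprod
    (LinearMap.mulLeft Fr (algebraMap Fq _ ω) ∘ₗ (map Fr Fq n).toLinearMap)

theorem ofPair_apply (ω : Fq) (p : CyclicQuotient Fr n × CyclicQuotient Fr n) :
    ofPair Fr n ω p = map Fr Fq n p.1 + algebraMap Fq _ ω * map Fr Fq n p.2 := rfl

theorem ofPair_mk (ω : Fq) (f g : Fr[X]) :
    ofPair Fr n ω (Ideal.Quotient.mk _ f, Ideal.Quotient.mk _ g) =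
      Ideal.Quotient.mk _ (f.map (algebraMap Fr Fq) + C ω * g.map (algebraMap Fr Fq)) := by
  rw [ofPair_apply, map_mk, map_mk, map_add, map_mul]
  rfl

theorem ofPair_smul (ω : Fq) (r : CyclicQuotient Fr n)
    (p : CyclicQuotient Fr n × CyclicQuotient Fr n) :
    ofPair Fr n ω (r • p) = map Fr Fq n r * ofPair Fr n ω p := by
  simp only [ofPair_apply, Prod.smul_fst, Prod.smul_snd, smul_eq_mul, map_mul]
  ring

theorem ofPair_pow_X_smul (ω : Fq) (k : ℕ) (p : CyclicQuotient Fr n × CyclicQuotient Fr n) :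
    ofPair Fr n ω ((Ideal.Quotient.mk _ X : CyclicQuotient Fr n) ^ k • p) =
      (Ideal.Quotient.mk _ X : CyclicQuotient Fq n) ^ k * ofPair Fr n ω p := by
  rw [ofPair_smul, map_pow, map_mk, Polynomial.map_X]

theorem ofPair_surjective {ω : Fq} (hω : Submodule.span Fr {1, ω} = ⊤) :
    Function.Surjective (ofPair Fr n ω) := by
  intro z
  obtain ⟨p, rfl⟩ := Ideal.Quotient.mk_surjective z
  obtain ⟨f, g, rfl⟩ := exists_eq_map_add_C_mul_map hω p
  exact ⟨_, ofPair_mk ω f g⟩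

theorem ofPair_bijective {ω : Fq} (hω : Submodule.span Fr {1, ω} = ⊤)
    (h2 : finrank Fr Fq = 2) (hn : n ≠ 0) : Function.Bijective (ofPair Fr n ω) := by
  have : FiniteDimensional Fr Fq := Module.finite_of_finrank_eq_succ h2
  have : FiniteDimensional Fq (CyclicQuotient Fq n) :=
    finiteDimensional_quotient_span (X_pow_sub_one_ne_zero hn)
  have : FiniteDimensional Fr (CyclicQuotient Fr n) :=
    finiteDimensional_quotient_span (X_pow_sub_one_ne_zero hn)
  have : FiniteDimensional Fr (CyclicQuotient Fq n) := Module.Finite.trans Fq _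
  have hdim : finrank Fr (CyclicQuotient Fr n × CyclicQuotient Fr n) =
      finrank Fr (CyclicQuotient Fq n) := by
    rw [Module.finrank_prod, ← Module.finrank_mul_finrank Fr Fq (CyclicQuotient Fq n), h2]
    simp only [finrank_quotient_span_eq_natDegree, natDegree_X_pow_sub_one]
    ring
  have hsurj := ofPair_surjective (n := n) hω
  exact ⟨(LinearMap.injective_iff_surjective_of_finrank_eq_finrank hdim).2 hsurj, hsurj⟩

variable (Fr) in
noncomputable def comapOfPair (ω : Fq) (C : Submodule Fr (CyclicQuotient Fq n))
    (hC : ∀ m ∈ C, Ideal.Quotient.mk _ X * m ∈ C) :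
    Submodule (CyclicQuotient Fr n) (CyclicQuotient Fr n × CyclicQuotient Fr n) where
  __ := C.comap (ofPair Fr n ω)
  smul_mem' r p hp := by
    show ofPair Fr n ω (r • p) ∈ C
    rw [ofPair_smul]
    exact map_mul_mem hC r hp

theorem map_ofPair_span_pair (hn : n ≠ 0) (ω : Fq) (a b c : Fr[X]) :
    ((Submodule.span (CyclicQuotient Fr n)
      {(Ideal.Quotient.mk _ a, Ideal.Quotient.mk _ b), (Ideal.Quotient.mk _ c, 0)}).restrictScalars
        Fr).map (ofPair Fr n ω) = Submodule.span Fr (cyclicGenSet Fr ω n a b c) := by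
  rw [← Submodule.span_smul_of_span_eq_top
    (span_range_pow_mk_X_eq_top (X_pow_sub_one_ne_zero hn)), Submodule.map_span]
  have hc : ofPair Fr n ω (Ideal.Quotient.mk _ c, 0) =
      Ideal.Quotient.mk _ (c.map (algebraMap Fr Fq)) := by
    simpa using ofPair_mk (n := n) ω c 0
  congr 1
  ext z
  simp only [Set.mem_image, Set.mem_smul, Set.mem_range, Set.mem_insert_iff, Set.mem_singleton_iff,
    cyclicGenSet, Set.mem_ofPred_eq]
  constructor
  · rintro ⟨_, ⟨_, ⟨k, rfl⟩, _, rfl | rfl, rfl⟩, rfl⟩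
    · exact ⟨k, Or.inl (by rw [ofPair_pow_X_smul, ofPair_mk])⟩
    · exact ⟨k, Or.inr (by rw [ofPair_pow_X_smul, hc])⟩
  · rintro ⟨k, rfl | rfl⟩
    · exact ⟨_, ⟨_, ⟨k, rfl⟩, _, Or.inl rfl, rfl⟩, by rw [ofPair_pow_X_smul, ofPair_mk]⟩
    · exact ⟨_, ⟨_, ⟨k, rfl⟩, _, Or.inr rfl, rfl⟩, by rw [ofPair_pow_X_smul, hc]⟩

end CyclicQuotient

open CyclicQuotient

theorem cyclic_subfield_linear_two_generators_general {Fr Fq : Type*} [Field Fr]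
    [Field Fq] [Algebra Fr Fq]
    (ω : Fq) (B : Module.Basis (Fin 2) Fr Fq) (hB0 : B 0 = 1) (hB1 : B 1 = ω)
    {n : ℕ} (hn : 0 < n)
    (C : Submodule Fr
      (Polynomial Fq ⧸ Ideal.span {(Polynomial.X : Polynomial Fq) ^ n - 1}))
    (hC : ∀ m ∈ C,
      Ideal.Quotient.mk (Ideal.span {(Polynomial.X : Polynomial Fq) ^ n - 1})
        Polynomial.X * m ∈ C) :
    ∃ a b c : Polynomial Fr, b.Monic ∧ c.Monic ∧
      b ∣ (Polynomial.X ^ n - 1) ∧ c ∣ (Polynomial.X ^ n - 1) ∧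
      c ∣ a * ((Polynomial.X ^ n - 1) /ₘ b) ∧
      C = Submodule.span Fr (cyclicGenSet Fr ω n a b c) ∧
      Module.finrank Fr C = 2 * n - b.natDegree - c.natDegree := by
  have hf : (X : Fr[X]) ^ n - 1 ≠ 0 := X_pow_sub_one_ne_zero hn.ne'
  have hω : Submodule.span Fr {1, ω} = ⊤ := hB0 ▸ hB1 ▸ B.span_pair_eq_top
  have hbij := ofPair_bijective hω (by simpa using finrank_eq_card_basis B) hn.ne'
  set D := comapOfPair Fr ω C hC
  obtain ⟨b, hb, hbf, hDb⟩ := exists_monic_dvd_eq_span_mk hf (D.map (LinearMap.snd _ _ _))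
  obtain ⟨c, hc, hcf, hDc⟩ := exists_monic_dvd_eq_span_mk hf (D.comap (LinearMap.inl _ _ _))
  obtain ⟨⟨α, _⟩, hαD, rfl⟩ :=
    Submodule.mem_map.1 (hDb ▸ Ideal.mem_span_singleton_self _)
  obtain ⟨a, rfl⟩ := Ideal.Quotient.mk_surjective α
  have hCD : C = (D.restrictScalars Fr).map (ofPair Fr n ω) :=
    (Submodule.map_comap_eq_of_surjective hbij.2 C).symm
  refine ⟨a, b, c, hb, hc, hbf, hcf, dvd_mul_divByMonic_of_mk_mem hb hbf hcf hαD hDc, ?_, ?_⟩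
  · rw [hCD, D.eq_span_pair_of_map_snd_of_comap_inl hαD hDb hDc, map_ofPair_span_pair hn.ne']
  · rw [hCD, ← (Submodule.equivMapOfInjective _ hbij.1 _).finrank_eq,
      finrank_restrictScalars_of_map_snd_of_comap_inl hf hbf hcf hDb hDc, natDegree_X_pow_sub_one]

/-- Structure theorem: a cyclic `F_r`-linear code of length `n` over the
quadratic extension `F_q = F_r(ω)` has a two-generator representation
`⟨a + ωb, c⟩`, with `b, c` monic divisors of `xⁿ-1`, `c ∣ a·(xⁿ-1)/b`, and
`dim_{F_r} C = 2n - deg b - deg c`. -/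
theorem cyclic_subfield_linear_two_generators {Fr Fq : Type*} [Field Fr]
    [Field Fq] [Fintype Fr] [Fintype Fq] [Algebra Fr Fq]
    (ω : Fq) (B : Module.Basis (Fin 2) Fr Fq) (hB0 : B 0 = 1) (hB1 : B 1 = ω)
    {n : ℕ} (hn : 0 < n)
    (C : Submodule Fr
      (Polynomial Fq ⧸ Ideal.span {(Polynomial.X : Polynomial Fq) ^ n - 1}))
    (hC : ∀ m ∈ C,
      Ideal.Quotient.mk (Ideal.span {(Polynomial.X : Polynomial Fq) ^ n - 1})
        Polynomial.X * m ∈ C) :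
    ∃ a b c : Polynomial Fr, b.Monic ∧ c.Monic ∧
      b ∣ (Polynomial.X ^ n - 1) ∧ c ∣ (Polynomial.X ^ n - 1) ∧
      c ∣ a * ((Polynomial.X ^ n - 1) /ₘ b) ∧
      C = Submodule.span Fr (cyclicGenSet Fr ω n a b c) ∧
      Module.finrank Fr C = 2 * n - b.natDegree - c.natDegree :=
  cyclic_subfield_linear_two_generators_general ω B hB0 hB1 hn C hC
end

section
/- In the setting of the two-generator representation of a cyclic F_r-linear code C over F_q = F_r(ω): if ⟨a(x)+ωb(x), c(x)⟩ = ⟨a'(x)+ωb'(x), c'(x)⟩ with both representations satisfying the divisibility/monicity conditions, then b' = b, c' = c, and a' ≡ a (mod c(x)). -/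
/-! Modulo `x^n - 1`, every element of the span of `cyclicGenSet Fr ω n a b c` is
`g (a + ω b) + h c` with `g, h ∈ F_r[x]`. Splitting coefficients along the basis `1, ω`, an
element `x + ω y` of the span therefore has `y ≡ g b` and `x ≡ g a + h c` modulo `x^n - 1 = b m`.
This gives `b ∣ y`; and if `y = k b`, then `m ∣ k - g`, so `c ∣ a m` gives `c ∣ x - k a`.
Applying this to the generators of each representation inside the span of the other gives
`b ∣ b'`, `c ∣ c'` and the converse, so the two triples share `b` and `c` because these are
monic. Then `c ∣ a' - a`. -/

namespace Polynomial

variable {R A : Type*} [CommRing R] [CommRing A] [Algebra R A]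

noncomputable def mapLinear (π : A →ₗ[R] R) : A[X] →+ R[X] where
  toFun p := ⟨AddMonoidAlgebra.ofCoeff (Finsupp.mapRange π (map_zero π) p.toFinsupp.coeff)⟩
  map_zero' := by ext; simp
  map_add' p q := by ext; simp

theorem coeff_mapLinear (π : A →ₗ[R] R) (p : A[X]) (k : ℕ) :
    (mapLinear π p).coeff k = π (p.coeff k) := rfl

theorem mapLinear_C (π : A →ₗ[R] R) (x : A) : mapLinear π (C x) = C (π x) := by
  ext k; simp only [coeff_mapLinear, coeff_C]; split_ifs <;> simp

theorem mapLinear_map_mul (π : A →ₗ[R] R) (g : R[X]) (p : A[X]) :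
    mapLinear π (g.map (algebraMap R A) * p) = g * mapLinear π p := by
  ext k
  simp only [coeff_mapLinear, coeff_mul, coeff_map, map_sum, ← Algebra.smul_def, map_smul,
    smul_eq_mul]

theorem dvd_mapLinear_of_map_dvd (π : A →ₗ[R] R) {p : R[X]} {q : A[X]}
    (h : p.map (algebraMap R A) ∣ q) : p ∣ mapLinear π q := by
  obtain ⟨u, rfl⟩ := h
  exact ⟨_, mapLinear_map_mul π p u⟩

theorem dvd_and_dvd_of_map_dvd_map_add_C_mul_map {ω : A} (B : Module.Basis (Fin 2) R A)
    (hB0 : B 0 = 1) (hB1 : B 1 = ω) {p f₀ f₁ : R[X]}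
    (h : p.map (algebraMap R A) ∣ f₀.map (algebraMap R A) + C ω * f₁.map (algebraMap R A)) :
    p ∣ f₀ ∧ p ∣ f₁ := by
  have hcoord (i : Fin 2) : mapLinear (B.coord i)
      (f₀.map (algebraMap R A) + C ω * f₁.map (algebraMap R A)) =
        f₀ * C (B.coord i (B 0)) + f₁ * C (B.coord i (B 1)) := by
    rw [← mul_one (f₀.map _), ← C_1, mul_comm (C ω), map_add, mapLinear_map_mul,
      mapLinear_map_mul, mapLinear_C, mapLinear_C, hB0, hB1]
  constructor
  · simpa [hcoord] using dvd_mapLinear_of_map_dvd (B.coord 0) h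
  · simpa [hcoord] using dvd_mapLinear_of_map_dvd (B.coord 1) h

end Polynomial

open Polynomial

theorem dvd_sub_mul_of_dvd_sub_mul {R : Type*} [CommRing R] [IsDomain R] {a b c m g h k x : R}
    (hb : b ≠ 0) (hcm : c ∣ a * m) (hc : c ∣ b * m) (hk : b * m ∣ (k - g) * b)
    (hx : b * m ∣ x - (g * a + h * c)) : c ∣ x - k * a := by
  have hm : m ∣ k - g := (mul_dvd_mul_iff_left hb).mp (by rwa [mul_comm b (k - g)])
  have hkg : c ∣ (k - g) * a := hcm.trans (by rw [mul_comm (k - g)]; exact mul_dvd_mul_left a hm)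
  have hx' : c ∣ x - (g * a + h * c) := hc.trans hx
  rw [show x - k * a = x - (g * a + h * c) + h * c - (k - g) * a by ring]
  exact (hx'.add (dvd_mul_left c h)).sub hkg

section CyclicCode

variable {Fr Fq : Type*} [Field Fr] [Field Fq] [Algebra Fr Fq] (ω : Fq) (n : ℕ)

theorem exists_of_mem_span_cyclicGenSet {a b c : Fr[X]}
    {z : Fq[X] ⧸ Ideal.span {(X : Fq[X]) ^ n - 1}}
    (hz : z ∈ Submodule.span Fr (cyclicGenSet Fr ω n a b c)) :
    ∃ g h : Fr[X], z = Ideal.Quotient.mk _ (g.map (algebraMap Fr Fq) *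
        (a.map (algebraMap Fr Fq) + C ω * b.map (algebraMap Fr Fq)) +
      h.map (algebraMap Fr Fq) * c.map (algebraMap Fr Fq)) := by
  induction hz using Submodule.span_induction with
  | mem m hm =>
    obtain ⟨k, rfl | rfl⟩ := hm
    · exact ⟨X ^ k, 0, by simp⟩
    · exact ⟨0, X ^ k, by simp⟩
  | zero => exact ⟨0, 0, by simp⟩
  | add u v _ _ hu hv =>
    obtain ⟨g₁, h₁, rfl⟩ := hu
    obtain ⟨g₂, h₂, rfl⟩ := hv
    exact ⟨g₁ + g₂, h₁ + h₂, by rw [← map_add]; congr 1; simp only [Polynomial.map_add]; ring⟩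
  | smul r u _ hu =>
    obtain ⟨g, h, rfl⟩ := hu
    refine ⟨C r * g, C r * h, ?_⟩
    rw [← Ideal.Quotient.mkₐ_eq_mk Fr, ← map_smul, Algebra.smul_def,
      Polynomial.algebraMap_apply]
    congr 1
    simp only [Polynomial.map_mul, map_C]
    ring

variable {ω} (B : Module.Basis (Fin 2) Fr Fq) (hB0 : B 0 = 1) (hB1 : B 1 = ω)
include hB0 hB1

theorem exists_dvd_sub_of_mem_span_cyclicGenSet {a b c x y : Fr[X]}
    (hmem : Ideal.Quotient.mk _ (x.map (algebraMap Fr Fq) + C ω * y.map (algebraMap Fr Fq)) ∈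
      Submodule.span Fr (cyclicGenSet Fr ω n a b c)) :
    ∃ g h : Fr[X], X ^ n - 1 ∣ y - g * b ∧ X ^ n - 1 ∣ x - (g * a + h * c) := by
  obtain ⟨g, h, he⟩ := exists_of_mem_span_cyclicGenSet ω n hmem
  have hdvd := Ideal.mem_span_singleton.mp (Ideal.Quotient.eq.mp he)
  have hsplit : x.map (algebraMap Fr Fq) + C ω * y.map (algebraMap Fr Fq) -
      (g.map (algebraMap Fr Fq) * (a.map (algebraMap Fr Fq) + C ω * b.map (algebraMap Fr Fq)) +
        h.map (algebraMap Fr Fq) * c.map (algebraMap Fr Fq)) =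
      (x - (g * a + h * c)).map (algebraMap Fr Fq) +
        C ω * (y - g * b).map (algebraMap Fr Fq) := by
    simp only [Polynomial.map_sub, Polynomial.map_add, Polynomial.map_mul]
    ring
  have hN : ((X : Fr[X]) ^ n - 1).map (algebraMap Fr Fq) = X ^ n - 1 := by simp
  rw [hsplit, ← hN] at hdvd
  obtain ⟨hx, hy⟩ := dvd_and_dvd_of_map_dvd_map_add_C_mul_map B hB0 hB1 hdvd
  exact ⟨g, h, hy, hx⟩

theorem dvd_sub_mul_of_mem_span_cyclicGenSet {a b c x k : Fr[X]} (hb : b.Monic)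
    (hbd : b ∣ X ^ n - 1) (hcd : c ∣ X ^ n - 1) (hca : c ∣ a * ((X ^ n - 1) /ₘ b))
    (hmem : Ideal.Quotient.mk _
      (x.map (algebraMap Fr Fq) + C ω * (k * b).map (algebraMap Fr Fq)) ∈
        Submodule.span Fr (cyclicGenSet Fr ω n a b c)) :
    c ∣ x - k * a := by
  obtain ⟨g, h, hk, hx⟩ := exists_dvd_sub_of_mem_span_cyclicGenSet n B hB0 hB1 hmem
  have hN : X ^ n - 1 = b * ((X ^ n - 1) /ₘ b) := by
    have h := modByMonic_add_div (X ^ n - 1) b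
    rwa [(modByMonic_eq_zero_iff_dvd hb).2 hbd, zero_add, eq_comm] at h
  rw [hN] at hk hx hcd
  exact dvd_sub_mul_of_dvd_sub_mul hb.ne_zero hca hcd (by rwa [sub_mul]) hx

theorem dvd_and_dvd_of_span_cyclicGenSet_le {a b c a' b' c' : Fr[X]} (hb : b.Monic)
    (hbd : b ∣ X ^ n - 1) (hcd : c ∣ X ^ n - 1) (hca : c ∣ a * ((X ^ n - 1) /ₘ b))
    (hle : Submodule.span Fr (cyclicGenSet Fr ω n a' b' c') ≤
      Submodule.span Fr (cyclicGenSet Fr ω n a b c)) :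
    b ∣ b' ∧ c ∣ c' := by
  constructor
  · obtain ⟨g, -, hg, -⟩ := exists_dvd_sub_of_mem_span_cyclicGenSet n B hB0 hB1
      (x := a') (y := b') (hle (Submodule.subset_span ⟨0, Or.inl (by simp)⟩))
    exact (dvd_sub_left (dvd_mul_left b g)).mp (hbd.trans hg)
  · simpa using dvd_sub_mul_of_mem_span_cyclicGenSet n B hB0 hB1 (x := c') (k := 0) hb hbd hcd hca
      (hle (Submodule.subset_span ⟨0, Or.inr (by simp)⟩))

end CyclicCode

theorem cyclic_two_generators_unique_general {Fr Fq : Type*} [Field Fr]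
    [Field Fq] [Algebra Fr Fq]
    (ω : Fq) (B : Module.Basis (Fin 2) Fr Fq) (hB0 : B 0 = 1) (hB1 : B 1 = ω)
    {n : ℕ} (a b c a' b' c' : Polynomial Fr)
    (hb : b.Monic) (hc : c.Monic) (hb' : b'.Monic) (hc' : c'.Monic)
    (hbd : b ∣ (Polynomial.X ^ n - 1)) (hcd : c ∣ (Polynomial.X ^ n - 1))
    (hbd' : b' ∣ (Polynomial.X ^ n - 1)) (hcd' : c' ∣ (Polynomial.X ^ n - 1))
    (hca : c ∣ a * ((Polynomial.X ^ n - 1) /ₘ b))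
    (hca' : c' ∣ a' * ((Polynomial.X ^ n - 1) /ₘ b'))
    (hspan : Submodule.span Fr (cyclicGenSet Fr ω n a b c)
      = Submodule.span Fr (cyclicGenSet Fr ω n a' b' c')) :
    b' = b ∧ c' = c ∧ c ∣ (a' - a) := by
  obtain ⟨hbb', hcc'⟩ :=
    dvd_and_dvd_of_span_cyclicGenSet_le n B hB0 hB1 hb hbd hcd hca hspan.ge
  obtain ⟨hb'b, hc'c⟩ :=
    dvd_and_dvd_of_span_cyclicGenSet_le n B hB0 hB1 hb' hbd' hcd' hca' hspan.le
  have hbeq : b' = b := eq_of_monic_of_associated hb' hb (associated_of_dvd_dvd hb'b hbb')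
  have hceq : c' = c := eq_of_monic_of_associated hc' hc (associated_of_dvd_dvd hc'c hcc')
  refine ⟨hbeq, hceq, ?_⟩
  have hmem : Ideal.Quotient.mk _
      (a'.map (algebraMap Fr Fq) + C ω * (1 * b).map (algebraMap Fr Fq)) ∈
        Submodule.span Fr (cyclicGenSet Fr ω n a b c) :=
    hspan ▸ Submodule.subset_span ⟨0, Or.inl (by simp [hbeq])⟩
  simpa using dvd_sub_mul_of_mem_span_cyclicGenSet n B hB0 hB1 hb hbd hcd hca hmem

/-- Uniqueness of the two-generator representation of a cyclic `F_r`-linear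
code over `F_q = F_r(ω)`: if `⟨a + ωb, c⟩ = ⟨a' + ωb', c'⟩` with both triples
satisfying the monicity, divisibility and dimension conditions, then `b' = b`,
`c' = c` and `a' ≡ a (mod c)`. -/
theorem cyclic_two_generators_unique {Fr Fq : Type*} [Field Fr]
    [Field Fq] [Fintype Fr] [Fintype Fq] [Algebra Fr Fq]
    (ω : Fq) (B : Module.Basis (Fin 2) Fr Fq) (hB0 : B 0 = 1) (hB1 : B 1 = ω)
    {n : ℕ} (hn : 0 < n) (a b c a' b' c' : Polynomial Fr)
    (hb : b.Monic) (hc : c.Monic) (hb' : b'.Monic) (hc' : c'.Monic)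
    (hbd : b ∣ (Polynomial.X ^ n - 1)) (hcd : c ∣ (Polynomial.X ^ n - 1))
    (hbd' : b' ∣ (Polynomial.X ^ n - 1)) (hcd' : c' ∣ (Polynomial.X ^ n - 1))
    (hca : c ∣ a * ((Polynomial.X ^ n - 1) /ₘ b))
    (hca' : c' ∣ a' * ((Polynomial.X ^ n - 1) /ₘ b'))
    (hspan : Submodule.span Fr (cyclicGenSet Fr ω n a b c)
      = Submodule.span Fr (cyclicGenSet Fr ω n a' b' c'))
    (hdim : Module.finrank Fr (Submodule.span Fr (cyclicGenSet Fr ω n a b c))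
      = 2 * n - b.natDegree - c.natDegree)
    (hdim' : Module.finrank Fr (Submodule.span Fr (cyclicGenSet Fr ω n a' b' c'))
      = 2 * n - b'.natDegree - c'.natDegree) :
    b' = b ∧ c' = c ∧ c ∣ (a' - a) :=
  cyclic_two_generators_unique_general ω B hB0 hB1 a b c a' b' c' hb hc hb' hc' hbd hcd hbd' hcd'
    hca hca' hspan
end
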